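/- Let k ≥ 1 and let c : [ℕ]² → k be a stable coloring of pairs. If L is an infinite set that is limit-homogeneous for c with color j, then L contains an infinite subset H that is homogeneous for c with color j. -/
import Mathlib


/-- A coloring of pairs `c : [ℕ]² → k`, represented as a function on ordered
pairs: `c x y` is the color of the pair `{x, y}` for `x < y`. That it is a
`k`-coloring is expressed by the hypothesis `∀ x y, x < y → c x y < k`.

STATEMENT 13: Let k ≥ 1 and let c : [ℕ]² → k be a stable coloring of pairs
(for every x there is a color i < k to which c(x,·) is eventually constant).
If L is an infinite set that is limit-homogeneous for c with color j (for every
x ∈ L, c(x,y) = j for all sufficiently large y), then L contains an infinite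
subset H that is homogeneous for c with color j (c(x,y) = j for all x < y in H). -/
theorem stmt_13 (k : ℕ) (hk : 1 ≤ k) (c : ℕ → ℕ → ℕ)
    (hcol : ∀ x y : ℕ, x < y → c x y < k)
    (hstable : ∀ x : ℕ, ∃ i : ℕ, i < k ∧ ∃ z : ℕ, ∀ y : ℕ, x < y → z ≤ y → c x y = i)
    (j : ℕ) (hj : j < k) (L : Set ℕ) (hL : L.Infinite)
    (hlim : ∀ x ∈ L, ∃ z : ℕ, ∀ y : ℕ, x < y → z ≤ y → c x y = j) :
    ∃ H : Set ℕ, H ⊆ L ∧ H.Infinite ∧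
      ∀ x ∈ H, ∀ y ∈ H, x < y → c x y = j := by
  classical
  have hZ : ∀ x : ℕ, ∃ z : ℕ, x ∈ L → ∀ y : ℕ, x < y → z ≤ y → c x y = j := by
    intro x
    by_cases hx : x ∈ L
    · obtain ⟨z, hz⟩ := hlim x hx
      exact ⟨z, fun _ => hz⟩
    · exact ⟨0, fun h => absurd h hx⟩
  choose Z hZ using hZ
  have hex : ∀ n : ℕ, ∃ x ∈ L, n < x := fun n => hL.exists_gt n
  choose g hgL hgn using hex
  let f : ℕ → ℕ × ℕ := fun n => Nat.rec (g 0, Z (g 0))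
    (fun _ p => (g (max p.1 p.2), max p.2 (Z (g (max p.1 p.2))))) n
  set a : ℕ → ℕ := fun n => (f n).1 with ha
  set b : ℕ → ℕ := fun n => (f n).2 with hb
  have hstep : ∀ n, a (n + 1) = g (max (a n) (b n)) ∧
      b (n + 1) = max (b n) (Z (a (n + 1))) := by
    intro n
    constructor <;> rfl
  have haL : ∀ n, a n ∈ L := by
    intro n
    cases n with
    | zero => exact hgL 0
    | succ m => rw [(hstep m).1]; exact hgL _
  have hmono : ∀ n, a n < a (n + 1) ∧ b n < a (n + 1) := by
    intro n
    rw [(hstep n).1]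
    exact ⟨lt_of_le_of_lt (le_max_left _ _) (hgn _),
           lt_of_le_of_lt (le_max_right _ _) (hgn _)⟩
  have hamono : StrictMono a := strictMono_nat_of_lt_succ fun n => (hmono n).1
  have hbmono : Monotone b := monotone_nat_of_le_succ fun n => by
    rw [(hstep n).2]; exact le_max_left _ _
  have hZb : ∀ n, Z (a n) ≤ b n := by
    intro n
    cases n with
    | zero => exact le_refl _
    | succ m => rw [(hstep m).2]; exact le_max_right _ _
  have hkey : ∀ i m, i < m → Z (a i) ≤ a m := by
    intro i m him
    have h1 : Z (a i) < a (i + 1) := lt_of_le_of_lt (hZb i) (hmono i).2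
    exact le_of_lt (lt_of_lt_of_le h1 (hamono.le_iff_le.mpr him))
  refine ⟨Set.range a, ?_, ?_, ?_⟩
  · rintro x ⟨n, rfl⟩; exact haL n
  · exact Set.infinite_range_of_injective hamono.injective
  · rintro x ⟨i, rfl⟩ y ⟨m, rfl⟩ hxy
    have him : i < m := hamono.lt_iff_lt.mp hxy
    exact hZ (a i) (haL i) (a m) hxy (hkey i m him)
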